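/- If (s_j)_{j=0}^{κ+1} is a first-term dominant sequence of complex p×q matrices and (t_j)_{j=0}^{κ} is its first α-Schur transform, then (s_j)_{j=0}^{κ+1} is exactly the inverse α-Schur transform corresponding to [(t_j)_{j=0}^{κ}, s_0]. More generally, without the dominance hypothesis the inverse transform (w_j) of [(t_j), s_0] satisfies w_j = s_0 s_0^{+} s_j s_0^{+} s_0 for all 0 ≤ j ≤ κ+1. -/

import Mathlib

/-! Write `A = s 0`, `A⁺ = mp A`, `P = A A⁺`, `Q = A⁺ A`, `u` for the α-shifted sequence and `r`
for its reciprocal. By construction `r` is a left reciprocal of `u` after multiplication by `A⁺`;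
the heart of the matter is that it is also a right reciprocal after multiplication by `Q`, i.e.
`∑_{k ≤ n} r_{n-k} u_k Q = 0` for `n ≥ 1`, which follows by strong induction after exchanging the
order of a triangular double sum. Fed into the recursion of the inverse transform, this shows by
strong induction that `w_j = P s_j Q`: every inner sum collapses to `P u_{l+1} Q`, and the weighted
sum `∑_{l ≤ j} α^{j-l} u_{l+1}` telescopes back to `s_{j+1} - α^{j+1} s_0`. Under first-term
dominance `P s_j = s_j = s_j Q`.

The Moore–Penrose inverse itself exists because `(Aᴴ A)⁺ Aᴴ` is one, where `(Aᴴ A)⁺` is obtained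
from the continuous functional calculus of the Hermitian matrix `Aᴴ A` applied to `x ↦ x⁻¹`. -/

open Matrix BigOperators

def IsMP {m n : Type*} [Fintype m] [Fintype n] (A : Matrix m n ℂ) (B : Matrix n m ℂ) : Prop :=
  A * B * A = A ∧ B * A * B = B ∧ (A * B)ᴴ = A * B ∧ (B * A)ᴴ = B * A

open Classical in
noncomputable def mp {m n : Type*} [Fintype m] [Fintype n] (A : Matrix m n ℂ) : Matrix n m ℂ :=
  if h : ∃ B, IsMP A B then h.choose else 0

noncomputable def recip {p q : ℕ} (s : ℕ → Matrix (Fin p) (Fin q) ℂ) :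
    ℕ → Matrix (Fin q) (Fin p) ℂ
  | 0 => mp (s 0)
  | (j+1) => -(mp (s 0) * ∑ l : Fin (j+1), s (j+1 - l.val) * recip s l.val)
termination_by j => j
decreasing_by exact l.isLt

noncomputable def shiftA {p q : ℕ} (α : ℂ) (s : ℕ → Matrix (Fin p) (Fin q) ℂ) :
    ℕ → Matrix (Fin p) (Fin q) ℂ
  | 0 => s 0
  | (j+1) => (-α) • s j + s (j+1)

noncomputable def recipA {p q : ℕ} (α : ℂ) (s : ℕ → Matrix (Fin p) (Fin q) ℂ) :
    ℕ → Matrix (Fin q) (Fin p) ℂ :=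
  recip (shiftA α s)

/-- the first α-Schur transform. -/
noncomputable def schur1 {p q : ℕ} (α : ℂ) (s : ℕ → Matrix (Fin p) (Fin q) ℂ) :
    ℕ → Matrix (Fin p) (Fin q) ℂ :=
  fun j => s 0 * (-(recipA α s (j + 1))) * s 0

/-- the inverse α-Schur transform corresponding to [(t_j), A]. -/
noncomputable def invT {p q : ℕ} (α : ℂ) (t : ℕ → Matrix (Fin p) (Fin q) ℂ)
    (A : Matrix (Fin p) (Fin q) ℂ) : ℕ → Matrix (Fin p) (Fin q) ℂ
  | 0 => A
  | (j+1) => α ^ (j + 1) • A + ∑ l : Fin (j + 1), α ^ (j - l.val) •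
      (A * mp A * ∑ k : Fin (l.val + 1),
        t (l.val - k.val) * mp A *
          ((-α) • (if k.val = 0 then 0 else invT α t A (k.val - 1)) + invT α t A k.val))
termination_by j => j
decreasing_by
  · have hk := k.isLt; have hl := l.isLt; omega
  · have hk := k.isLt; have hl := l.isLt; omega

/-- first-term dominance of a matrix sequence up to κ. -/
def FTD {a b : ℕ} (κ : ℕ∞) (t : ℕ → Matrix (Fin a) (Fin b) ℂ) : Prop :=
  ∀ j : ℕ, (j : ℕ∞) ≤ κ →
    LinearMap.ker (Matrix.mulVecLin (t 0)) ≤ LinearMap.ker (Matrix.mulVecLin (t j)) ∧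
    LinearMap.range (Matrix.mulVecLin (t j)) ≤ LinearMap.range (Matrix.mulVecLin (t 0))

section MoorePenrose

variable {m n k : Type*} [Fintype m] [Fintype n]

open scoped ComplexOrder in
theorem isMP_mul_conjTranspose {A : Matrix m n ℂ} {S : Matrix n n ℂ} (hS : Sᴴ = S)
    (hcomm : Commute S (Aᴴ * A))
    (hHSH : Aᴴ * A * S * (Aᴴ * A) = Aᴴ * A) (hSHS : S * (Aᴴ * A) * S = S) :
    IsMP A (S * Aᴴ) := by
  classical
  have hA : A * (S * (Aᴴ * A)) = A := by
    have h : (Aᴴ * A) * (1 - S * (Aᴴ * A)) = 0 := by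
      rw [Matrix.mul_sub, Matrix.mul_one, ← Matrix.mul_assoc, hHSH, sub_self]
    rw [conjTranspose_mul_self_mul_eq_zero, Matrix.mul_sub, Matrix.mul_one, sub_eq_zero] at h
    exact h.symm
  refine ⟨?_, ?_, ?_, ?_⟩
  · simpa only [Matrix.mul_assoc] using hA
  · calc S * Aᴴ * A * (S * Aᴴ) = S * (Aᴴ * A) * S * Aᴴ := by simp only [Matrix.mul_assoc]
      _ = S * Aᴴ := by rw [hSHS]
  · simp only [conjTranspose_mul, conjTranspose_conjTranspose, hS, Matrix.mul_assoc]
  · rw [Matrix.mul_assoc, conjTranspose_mul, (isHermitian_conjTranspose_mul_self A).eq, hS,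
      hcomm.eq]

theorem exists_isMP (A : Matrix m n ℂ) : ∃ B, IsMP A B := by
  classical
  have hcont (f : ℝ → ℝ) : ContinuousOn f (spectrum ℝ (Aᴴ * A)) :=
    (Aᴴ * A).finite_real_spectrum.continuousOn f
  have hmul (f g : ℝ → ℝ) :
      cfc f (Aᴴ * A) * cfc g (Aᴴ * A) = cfc (fun x => f x * g x) (Aᴴ * A) :=
    (cfc_mul f g _ (hcont f) (hcont g)).symm
  have hid : cfc id (Aᴴ * A) = Aᴴ * A := cfc_id ℝ (Aᴴ * A) (isHermitian_conjTranspose_mul_self A)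
  -- the Moore–Penrose inverse of `Aᴴ * A`; the junk value `(0 : ℝ)⁻¹ = 0` handles its kernel
  set S := cfc (·⁻¹ : ℝ → ℝ) (Aᴴ * A)
  refine ⟨S * Aᴴ, isMP_mul_conjTranspose (cfc_predicate _ _ : IsSelfAdjoint S) ?_ ?_ ?_⟩
  · simpa only [hid] using cfc_commute_cfc (·⁻¹ : ℝ → ℝ) id (Aᴴ * A)
  · have h : cfc (id : ℝ → ℝ) (Aᴴ * A) * S * cfc (id : ℝ → ℝ) (Aᴴ * A) =
        cfc (id : ℝ → ℝ) (Aᴴ * A) := by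
      rw [hmul, hmul]; exact cfc_congr fun x _ => mul_inv_mul_cancel x
    simpa only [hid] using h
  · have h : S * cfc (id : ℝ → ℝ) (Aᴴ * A) * S = S := by
      rw [hmul, hmul]; exact cfc_congr fun x _ => by simpa using mul_inv_mul_cancel x⁻¹
    simpa only [hid] using h

theorem mp_isMP (A : Matrix m n ℂ) : IsMP A (mp A) := by
  have h := exists_isMP A
  rw [mp, dif_pos h]
  exact h.choose_spec

theorem mul_mp_mul_self_mul (A : Matrix m n ℂ) (X : Matrix n k ℂ) :
    A * (mp A * (A * X)) = A * X := by
  rw [← Matrix.mul_assoc, ← Matrix.mul_assoc, (mp_isMP A).1]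

theorem mp_mul_self_mul_mp_mul (A : Matrix m n ℂ) (X : Matrix m k ℂ) :
    mp A * (A * (mp A * X)) = mp A * X := by
  rw [← Matrix.mul_assoc, ← Matrix.mul_assoc, (mp_isMP A).2.1]

theorem mul_mp_mul_of_range_le [Fintype k] {A : Matrix m n ℂ} {X : Matrix m k ℂ}
    (h : LinearMap.range X.mulVecLin ≤ LinearMap.range A.mulVecLin) : A * (mp A * X) = X := by
  refine ext_iff_mulVec.2 fun v => ?_
  obtain ⟨w, hw⟩ := h ⟨v, rfl⟩
  simp only [mulVecLin_apply] at hw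
  rw [← Matrix.mul_assoc, ← mulVec_mulVec, ← hw, mulVec_mulVec, (mp_isMP A).1]

theorem mul_mp_mul_of_ker_le {A : Matrix m n ℂ} {X : Matrix k n ℂ}
    (h : LinearMap.ker A.mulVecLin ≤ LinearMap.ker X.mulVecLin) : X * (mp A * A) = X := by
  refine ext_iff_mulVec.2 fun v => ?_
  have hv : v - (mp A * A) *ᵥ v ∈ LinearMap.ker A.mulVecLin := by
    rw [LinearMap.mem_ker, mulVecLin_apply, mulVec_sub, mulVec_mulVec, ← Matrix.mul_assoc,
      (mp_isMP A).1, sub_self]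
  have := h hv
  rw [LinearMap.mem_ker, mulVecLin_apply, mulVec_sub, sub_eq_zero] at this
  rw [← mulVec_mulVec, this]

end MoorePenrose

section Reciprocal

variable {p q : ℕ}

theorem recip_zero (u : ℕ → Matrix (Fin p) (Fin q) ℂ) : recip u 0 = mp (u 0) := by
  rw [recip]

theorem recip_succ (u : ℕ → Matrix (Fin p) (Fin q) ℂ) (j : ℕ) :
    recip u (j + 1) = -(mp (u 0) * ∑ l ∈ Finset.range (j + 1), u (j + 1 - l) * recip u l) := by
  rw [recip, Fin.sum_univ_eq_sum_range (fun l => u (j + 1 - l) * recip u l)]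

theorem recip_mul_self_mul_mp_mul {c : ℕ} (u : ℕ → Matrix (Fin p) (Fin q) ℂ) (j : ℕ)
    (X : Matrix (Fin p) (Fin c) ℂ) : recip u j * (u 0 * (mp (u 0) * X)) = recip u j * X := by
  induction j using Nat.strong_induction_on with
  | _ j ih =>
    cases j with
    | zero => rw [recip_zero, mp_mul_self_mul_mp_mul]
    | succ j =>
      simp only [recip_succ, Matrix.neg_mul, Matrix.mul_assoc, Matrix.sum_mul]
      congr 2
      exact Finset.sum_congr rfl fun l hl => by rw [ih l (Finset.mem_range.mp hl)]

theorem sum_recip_mul_mul_mp_mul_self (u : ℕ → Matrix (Fin p) (Fin q) ℂ) {n : ℕ} (hn : 0 < n) :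
    ∑ k ∈ Finset.range (n + 1), recip u (n - k) * (u k * (mp (u 0) * u 0)) = 0 := by
  induction n using Nat.strong_induction_on with
  | _ n ih =>
  obtain ⟨l, rfl⟩ : ∃ l, n = l + 1 := ⟨n - 1, by omega⟩
  have hexpand : ∀ k ∈ Finset.range (l + 1), recip u (l + 1 - k) * (u k * (mp (u 0) * u 0)) =
      -(mp (u 0) * ∑ i ∈ Finset.range (l + 1 - k),
        u (l + 1 - k - i) * (recip u i * (u k * (mp (u 0) * u 0)))) := by
    intro k hk
    rw [show l + 1 - k = l - k + 1 by simp at hk; omega, recip_succ]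
    simp only [Matrix.neg_mul, Matrix.mul_assoc, Matrix.sum_mul]
  have hflip : ∑ k ∈ Finset.range (l + 1), ∑ i ∈ Finset.range (l + 1 - k),
      u (l + 1 - k - i) * (recip u i * (u k * (mp (u 0) * u 0))) =
      ∑ m ∈ Finset.range (l + 1), u (l + 1 - m) *
        ∑ k ∈ Finset.range (m + 1), recip u (m - k) * (u k * (mp (u 0) * u 0)) := by
    rw [← Finset.sum_range_diag_flip]
    refine Finset.sum_congr rfl fun m _ => ?_
    rw [Matrix.mul_sum]
    refine Finset.sum_congr rfl fun k hk => ?_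
    rw [show l + 1 - k - (m - k) = l + 1 - m by simp at hk; omega]
  have hsingle : ∑ m ∈ Finset.range (l + 1), u (l + 1 - m) *
        ∑ k ∈ Finset.range (m + 1), recip u (m - k) * (u k * (mp (u 0) * u 0)) =
      u (l + 1) * (mp (u 0) * u 0) := by
    rw [Finset.sum_eq_single 0]
    · rw [Finset.sum_range_one, recip_zero, mp_mul_self_mul_mp_mul, Nat.sub_zero]
    · intro m hm hm0
      rw [ih m (by simp at hm; omega) (Nat.pos_of_ne_zero hm0), Matrix.mul_zero]
    · simp
  rw [Finset.sum_range_succ, Finset.sum_congr rfl hexpand, Finset.sum_neg_distrib,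
    ← Matrix.mul_sum, hflip, hsingle, Nat.sub_self, recip_zero, neg_add_cancel]

end Reciprocal

section InverseSchur

variable {p q : ℕ}

theorem shiftA_zero (α : ℂ) (s : ℕ → Matrix (Fin p) (Fin q) ℂ) : shiftA α s 0 = s 0 := by
  rw [shiftA]

theorem shiftA_succ (α : ℂ) (s : ℕ → Matrix (Fin p) (Fin q) ℂ) (j : ℕ) :
    shiftA α s (j + 1) = (-α) • s j + s (j + 1) := by
  rw [shiftA]

theorem shiftA_congr (α : ℂ) {s s' : ℕ → Matrix (Fin p) (Fin q) ℂ} {k : ℕ}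
    (h : ∀ i ≤ k, s i = s' i) : shiftA α s k = shiftA α s' k := by
  cases k with
  | zero => rw [shiftA_zero, shiftA_zero, h 0 le_rfl]
  | succ k => rw [shiftA_succ, shiftA_succ, h k (by omega), h (k + 1) le_rfl]

theorem shiftA_mul_mul (α : ℂ) (s : ℕ → Matrix (Fin p) (Fin q) ℂ) (M : Matrix (Fin p) (Fin p) ℂ)
    (N : Matrix (Fin q) (Fin q) ℂ) (k : ℕ) :
    shiftA α (fun i => M * s i * N) k = M * shiftA α s k * N := by
  cases k with
  | zero => rw [shiftA_zero, shiftA_zero]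
  | succ k =>
    simp only [shiftA_succ, Matrix.mul_add, Matrix.add_mul, Matrix.mul_smul, Matrix.smul_mul]

theorem sum_pow_smul_shiftA_succ (α : ℂ) (s : ℕ → Matrix (Fin p) (Fin q) ℂ) (j : ℕ) :
    ∑ l ∈ Finset.range (j + 1), α ^ (j - l) • shiftA α s (l + 1) =
      s (j + 1) - α ^ (j + 1) • s 0 := by
  have hterm : ∀ l ∈ Finset.range (j + 1), α ^ (j - l) • shiftA α s (l + 1) =
      α ^ (j + 1 - (l + 1)) • s (l + 1) - α ^ (j + 1 - l) • s l := by
    intro l hl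
    rw [shiftA_succ, show j + 1 - l = j - l + 1 by simp at hl; omega, Nat.add_sub_add_right,
      smul_add, smul_smul, pow_succ, mul_neg, neg_smul]
    abel
  rw [Finset.sum_congr rfl hterm, Finset.sum_range_sub (fun l => α ^ (j + 1 - l) • s l),
    Nat.sub_self, Nat.sub_zero, pow_zero, one_smul]

theorem recipA_zero (α : ℂ) (s : ℕ → Matrix (Fin p) (Fin q) ℂ) : recipA α s 0 = mp (s 0) := by
  rw [recipA, recip_zero, shiftA_zero]

theorem invT_succ (α : ℂ) (t : ℕ → Matrix (Fin p) (Fin q) ℂ) (A : Matrix (Fin p) (Fin q) ℂ)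
    (j : ℕ) :
    invT α t A (j + 1) = α ^ (j + 1) • A + ∑ l ∈ Finset.range (j + 1), α ^ (j - l) •
      (A * mp A * ∑ k ∈ Finset.range (l + 1), t (l - k) * mp A * shiftA α (invT α t A) k) := by
  rw [invT, ← Fin.sum_univ_eq_sum_range]
  refine congrArg _ (Finset.sum_congr rfl fun l _ => ?_)
  rw [← Fin.sum_univ_eq_sum_range]
  refine congrArg _ (congrArg _ (Finset.sum_congr rfl fun k _ => congrArg _ ?_))
  rcases k with ⟨_ | k, hk⟩
  · simp [shiftA_zero]
  · simp [shiftA_succ]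

theorem recipA_mul_self_mul_mp_mul {c : ℕ} (α : ℂ) (s : ℕ → Matrix (Fin p) (Fin q) ℂ) (j : ℕ)
    (X : Matrix (Fin p) (Fin c) ℂ) : recipA α s j * (s 0 * (mp (s 0) * X)) = recipA α s j * X := by
  simpa only [recipA, shiftA_zero] using recip_mul_self_mul_mp_mul (shiftA α s) j X

theorem sum_recipA_mul_shiftA (α : ℂ) (s : ℕ → Matrix (Fin p) (Fin q) ℂ) {n : ℕ} (hn : 0 < n) :
    ∑ k ∈ Finset.range (n + 1), recipA α s (n - k) * (shiftA α s k * (mp (s 0) * s 0)) = 0 := by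
  simpa only [recipA, shiftA_zero] using sum_recip_mul_mul_mp_mul_self (shiftA α s) hn

theorem sum_schur1_mul_shiftA (α : ℂ) (s : ℕ → Matrix (Fin p) (Fin q) ℂ) (l : ℕ) :
    ∑ k ∈ Finset.range (l + 1), schur1 α s (l - k) * mp (s 0) *
        (s 0 * mp (s 0) * shiftA α s k * (mp (s 0) * s 0)) =
      s 0 * (mp (s 0) * (shiftA α s (l + 1) * (mp (s 0) * s 0))) := by
  have hterm : ∀ k ∈ Finset.range (l + 1), schur1 α s (l - k) * mp (s 0) *
      (s 0 * mp (s 0) * shiftA α s k * (mp (s 0) * s 0)) =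
      -(s 0 * (recipA α s (l + 1 - k) * (shiftA α s k * (mp (s 0) * s 0)))) := by
    intro k hk
    simp only [schur1, Matrix.mul_assoc, mul_mp_mul_self_mul, Matrix.neg_mul, Matrix.mul_neg,
      recipA_mul_self_mul_mp_mul]
    rw [show l - k + 1 = l + 1 - k by simp at hk; omega]
  have hconv := sum_recipA_mul_shiftA α s (Nat.succ_pos l)
  rw [Finset.sum_range_succ, Nat.sub_self, recipA_zero] at hconv
  rw [Finset.sum_congr rfl hterm, Finset.sum_neg_distrib, ← Matrix.mul_sum,
    eq_neg_of_add_eq_zero_left hconv, Matrix.mul_neg, neg_neg]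

theorem invT_schur1 (α : ℂ) (s : ℕ → Matrix (Fin p) (Fin q) ℂ) (j : ℕ) :
    invT α (schur1 α s) (s 0) j = s 0 * mp (s 0) * s j * (mp (s 0) * s 0) := by
  have hbase : s 0 * mp (s 0) * s 0 * (mp (s 0) * s 0) = s 0 := by
    rw [(mp_isMP (s 0)).1, ← Matrix.mul_assoc, (mp_isMP (s 0)).1]
  induction j using Nat.strong_induction_on with
  | _ j ih =>
  cases j with
  | zero => rw [invT, hbase]
  | succ j =>
    have hinner : ∀ l ∈ Finset.range (j + 1), s 0 * mp (s 0) * ∑ k ∈ Finset.range (l + 1),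
        schur1 α s (l - k) * mp (s 0) * shiftA α (invT α (schur1 α s) (s 0)) k =
        s 0 * mp (s 0) * shiftA α s (l + 1) * (mp (s 0) * s 0) := by
      intro l hl
      have hshift : ∀ k ∈ Finset.range (l + 1), shiftA α (invT α (schur1 α s) (s 0)) k =
          s 0 * mp (s 0) * shiftA α s k * (mp (s 0) * s 0) := fun k hk => by
        rw [← shiftA_mul_mul]
        exact shiftA_congr α fun i hi => ih i (by simp at hk hl; omega)
      rw [Finset.sum_congr rfl fun k hk => by rw [hshift k hk], Matrix.mul_assoc,
        sum_schur1_mul_shiftA]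
      simp only [Matrix.mul_assoc, mul_mp_mul_self_mul]
    rw [invT_succ, Finset.sum_congr rfl fun l hl => by rw [hinner l hl, ← shiftA_mul_mul],
      sum_pow_smul_shiftA_succ, hbase, add_sub_cancel]

end InverseSchur

/-- Proposition 10.10 / Lemma 10.9: a first-term dominant sequence is recovered
    from its first α-Schur transform and its first matrix; in general the inverse
    transform of [(t_j), s_0] gives s_0 s_0^+ s_j s_0^+ s_0. -/
theorem stmt18 {p q : ℕ} (α : ℂ) (κ : ℕ∞)
    (s : ℕ → Matrix (Fin p) (Fin q) ℂ) :
    (FTD (κ + 1) s → ∀ j : ℕ, (j : ℕ∞) ≤ κ + 1 →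
      invT α (schur1 α s) (s 0) j = s j) ∧
    (∀ j : ℕ, (j : ℕ∞) ≤ κ + 1 →
      invT α (schur1 α s) (s 0) j = s 0 * mp (s 0) * s j * mp (s 0) * s 0) := by
  refine ⟨fun hdom j hj => ?_, fun j _ => by simp only [invT_schur1, Matrix.mul_assoc]⟩
  obtain ⟨hker, hran⟩ := hdom j hj
  rw [invT_schur1, Matrix.mul_assoc (s 0 * mp (s 0)), mul_mp_mul_of_ker_le hker, Matrix.mul_assoc,
    mul_mp_mul_of_range_le hran]
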